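/- Let G be a compact abelian topological group, let W ∈ F₁ and let u : ℕ → G be a sequence that is well distributed (with respect to the normalized Haar measure on G) with respect to the uniform Riesz mean UW. Then for every g : ℕ → G with lim_{n→∞} g(n) = 0 (the identity of G), the sequence n ↦ u(n) + g(n) is also well distributed with respect to UW. -/

import Mathlib

open Filter MeasureTheory Finset
open scoped ENNReal Classical

noncomputable section

/-- Discrete derivative (first order difference) of a real sequence. -/
def dd (f : ℕ → ℝ) : ℕ → ℝ := fun n => f (n + 1) - f n

/-- Discrete derivative of an integer sequence. -/
def ddZ (f : ℕ → ℤ) : ℕ → ℤ := fun n => f (n + 1) - f n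

/-- Membership in the class `F_ℓ`:  `F₀` consists of eventually monotone sequences tending
to `0` whose series diverges in absolute value; `F_{ℓ+1} = {f : Δf ∈ F_ℓ}`. -/
def MemF : ℕ → (ℕ → ℝ) → Prop
  | 0 => fun f =>
      (∃ N : ℕ, (∀ m n, N ≤ m → m ≤ n → f m ≤ f n) ∨ (∀ m n, N ≤ m → m ≤ n → f n ≤ f m)) ∧
      Tendsto f atTop (nhds 0) ∧
      Tendsto (fun N => |∑ n ∈ Finset.Icc 1 N, f n|) atTop atTop
  | (ℓ + 1) => fun f => MemF ℓ (dd f)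

/-- `R ⊆ ℕ` is `W`-syndetic. -/
def WSyndetic (W : ℕ → ℝ) (R : Set ℕ) : Prop :=
  ∃ l : ℕ, ∀ M N : ℕ, M ≤ N → (l : ℝ) ≤ W N - W M →
    1 ≤ ∑ n ∈ Finset.Icc M N, Set.indicator R (dd W) n

/-- `R ⊆ ℕ` is thick: it contains arbitrarily long intervals. -/
def Thick (R : Set ℕ) : Prop := ∀ k : ℕ, ∃ a : ℕ, ∀ i ≤ k, a + i ∈ R

/-- The uniform Riesz mean (with respect to `W`) of the sequence `a` equals `L`. -/
def UWLim {E : Type*} [NormedAddCommGroup E] [NormedSpace ℝ E]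
    (W : ℕ → ℝ) (a : ℕ → E) (L : E) : Prop :=
  ∀ ε : ℝ, 0 < ε → ∃ l : ℕ, ∀ M N : ℕ, M ≤ N → (l : ℝ) ≤ W N - W M →
    ‖(W N - W M)⁻¹ • ∑ n ∈ Finset.Icc M N, dd W n • a n - L‖ < ε

/-- `x : ℕ → G` is `μ`-well distributed with respect to the uniform Riesz mean along `W`. -/
def WellDistributed {G : Type*} [TopologicalSpace G] [MeasurableSpace G]
    (W : ℕ → ℝ) (x : ℕ → G) (μ : Measure G) : Prop :=
  ∀ F : C(G, ℂ), UWLim W (fun n => F (x n)) (∫ g, F g ∂μ)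

/-- `p(Δ)f` for an integer polynomial `p`. -/
def polyDelta (p : Polynomial ℤ) (f : ℕ → ℝ) : ℕ → ℝ :=
  fun n => ∑ j ∈ Finset.range (p.natDegree + 1), (p.coeff j : ℝ) * dd^[j] f n

/-- `E ⊆ ℕ` has positive upper Banach density. -/
def PosUpperBanach (E : Set ℕ) : Prop :=
  0 < Filter.limsup (fun N : ℕ =>
    ⨆ M : ℕ, (∑ n ∈ Finset.Ico M (M + N), Set.indicator E (fun _ => (1 : ℝ)) n) / N) atTop

/-! `F (u n + g n) - F (u n) → 0` by uniform continuity of `F` on the compact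
group, and a null sequence has uniform Riesz mean `0`. The latter holds because `ΔW` has
eventually constant sign and is bounded, so `∑_{M ≤ n ≤ N} |ΔW n|` exceeds `|W N - W M|` by at
most a constant; the finitely many terms where the null sequence is large then contribute
`O(1)`, which is negligible against `W N - W M`. -/

lemma sum_Icc_dd (W : ℕ → ℝ) {M N : ℕ} (h : M ≤ N + 1) :
    ∑ n ∈ Icc M N, dd W n = W (N + 1) - W M := by
  rw [← Finset.Ico_add_one_right_eq_Icc]
  exact Finset.sum_Ico_sub W h

lemma MemF.exists_sign_eventually_nonneg_mul {f : ℕ → ℝ} (hf : MemF 0 f) :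
    ∃ σ : ℝ, |σ| = 1 ∧ ∀ᶠ n in atTop, 0 ≤ σ * f n := by
  obtain ⟨⟨N, hmono | hanti⟩, hlim, -⟩ := hf
  · refine ⟨-1, by norm_num, eventually_atTop.2 ⟨N, fun n hn => ?_⟩⟩
    have : f n ≤ 0 := ge_of_tendsto hlim (eventually_atTop.2 ⟨n, fun m => hmono n m hn⟩)
    linarith
  · refine ⟨1, by norm_num, eventually_atTop.2 ⟨N, fun n hn => ?_⟩⟩
    have : 0 ≤ f n := le_of_tendsto hlim (eventually_atTop.2 ⟨n, fun m => hanti n m hn⟩)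
    linarith

lemma exists_sum_abs_dd_le_of_eventually_sign {W : ℕ → ℝ} {σ : ℝ} (hσ : |σ| = 1)
    (hsign : ∀ᶠ n in atTop, 0 ≤ σ * dd W n) {B : ℝ} (hB : ∀ n, |dd W n| ≤ B) :
    ∃ K, ∀ M N, M ≤ N → ∑ n ∈ Icc M N, |dd W n| ≤ K + |W N - W M| := by
  obtain ⟨n₀, hn₀⟩ := eventually_atTop.1 hsign
  refine ⟨B + ∑ n ∈ range n₀, 2 * |dd W n|, fun M N hMN => ?_⟩
  have habs (x : ℝ) : |σ * x| = |x| := by rw [abs_mul, hσ, one_mul]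
  have hpt (n : ℕ) : |dd W n| ≤ σ * dd W n + if n < n₀ then 2 * |dd W n| else 0 := by
    split_ifs with h
    · linarith [habs (dd W n) ▸ neg_abs_le (σ * dd W n)]
    · rw [← habs, abs_of_nonneg (hn₀ n (not_lt.1 h)), add_zero]
  have hearly : ∑ n ∈ Icc M N, (if n < n₀ then 2 * |dd W n| else 0) ≤
      ∑ n ∈ range n₀, 2 * |dd W n| := by
    rw [← sum_filter]
    refine sum_le_sum_of_subset_of_nonneg (fun n hn => ?_) (fun n _ _ => by positivity)
    exact mem_range.2 (mem_filter.1 hn).2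
  have hlast : W (N + 1) - W M = dd W N + (W N - W M) := by rw [dd]; ring
  calc ∑ n ∈ Icc M N, |dd W n|
      ≤ ∑ n ∈ Icc M N, (σ * dd W n + if n < n₀ then 2 * |dd W n| else 0) :=
        sum_le_sum fun n _ => hpt n
    _ = σ * (W (N + 1) - W M) + ∑ n ∈ Icc M N, (if n < n₀ then 2 * |dd W n| else 0) := by
      rw [sum_add_distrib, ← mul_sum, sum_Icc_dd W (by omega)]
    _ ≤ (|dd W N| + |W N - W M|) + ∑ n ∈ range n₀, 2 * |dd W n| := by
      gcongr
      calc σ * (W (N + 1) - W M) ≤ |σ * (W (N + 1) - W M)| := le_abs_self _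
        _ = |dd W N + (W N - W M)| := by rw [habs, hlast]
        _ ≤ |dd W N| + |W N - W M| := abs_add_le _ _
    _ ≤ B + ∑ n ∈ range n₀, 2 * |dd W n| + |W N - W M| := by linarith [hB N]

lemma MemF.exists_sum_abs_dd_le {W : ℕ → ℝ} (hW : MemF 1 W) :
    ∃ K, ∀ M N, M ≤ N → ∑ n ∈ Icc M N, |dd W n| ≤ K + |W N - W M| := by
  obtain ⟨σ, hσ, hsign⟩ := MemF.exists_sign_eventually_nonneg_mul (f := dd W) hW
  obtain ⟨B, hB⟩ := isBounded_iff_forall_norm_le.1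
    (Metric.isBounded_range_of_tendsto _ (hW : MemF 0 (dd W)).2.1)
  exact exists_sum_abs_dd_le_of_eventually_sign hσ hsign fun n => hB _ ⟨n, rfl⟩

section RieszMean

variable {E : Type*} [NormedAddCommGroup E] [NormedSpace ℝ E] {W : ℕ → ℝ}

lemma UWLim.add {a b : ℕ → E} {L L' : E} (ha : UWLim W a L) (hb : UWLim W b L') :
    UWLim W (a + b) (L + L') := by
  intro ε hε
  obtain ⟨l₁, h₁⟩ := ha (ε / 2) (by linarith)
  obtain ⟨l₂, h₂⟩ := hb (ε / 2) (by linarith)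
  refine ⟨max l₁ l₂, fun M N hMN hl => ?_⟩
  have hl₁ : (l₁ : ℝ) ≤ W N - W M := le_trans (by exact_mod_cast le_max_left l₁ l₂) hl
  have hl₂ : (l₂ : ℝ) ≤ W N - W M := le_trans (by exact_mod_cast le_max_right l₁ l₂) hl
  have hsplit : (W N - W M)⁻¹ • ∑ n ∈ Icc M N, dd W n • (a + b) n - (L + L') =
      ((W N - W M)⁻¹ • ∑ n ∈ Icc M N, dd W n • a n - L) +
      ((W N - W M)⁻¹ • ∑ n ∈ Icc M N, dd W n • b n - L') := by
    simp only [Pi.add_apply, smul_add, sum_add_distrib]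
    abel
  rw [hsplit]
  linarith [norm_add_le ((W N - W M)⁻¹ • ∑ n ∈ Icc M N, dd W n • a n - L)
    ((W N - W M)⁻¹ • ∑ n ∈ Icc M N, dd W n • b n - L'), h₁ M N hMN hl₁, h₂ M N hMN hl₂]

lemma UWLim.of_tendsto_zero {K : ℝ}
    (hK : ∀ M N, M ≤ N → ∑ n ∈ Icc M N, |dd W n| ≤ K + |W N - W M|)
    {c : ℕ → E} (hc : Tendsto c atTop (nhds 0)) : UWLim W c 0 := by
  intro ε hε
  obtain ⟨n₁, hn₁⟩ : ∃ n₁, ∀ n ≥ n₁, ‖c n‖ ≤ ε / 2 :=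
    eventually_atTop.1 (hc.norm.eventually (ge_mem_nhds (by rw [norm_zero]; linarith)))
  set C := ∑ n ∈ range n₁, |dd W n| * ‖c n‖
  have hpt (n : ℕ) : |dd W n| * ‖c n‖ ≤
      ε / 2 * |dd W n| + if n < n₁ then |dd W n| * ‖c n‖ else 0 := by
    split_ifs with h
    · nlinarith [abs_nonneg (dd W n)]
    · nlinarith [abs_nonneg (dd W n), hn₁ n (not_lt.1 h)]
  have hearly (M N : ℕ) : ∑ n ∈ Icc M N, (if n < n₁ then |dd W n| * ‖c n‖ else 0) ≤ C := by
    rw [← sum_filter]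
    refine sum_le_sum_of_subset_of_nonneg (fun n hn => ?_) (fun n _ _ => by positivity)
    exact mem_range.2 (mem_filter.1 hn).2
  have hsum (M N : ℕ) (hMN : M ≤ N) :
      ‖∑ n ∈ Icc M N, dd W n • c n‖ ≤ ε / 2 * (K + |W N - W M|) + C :=
    calc ‖∑ n ∈ Icc M N, dd W n • c n‖
        ≤ ∑ n ∈ Icc M N, |dd W n| * ‖c n‖ := by
          simpa only [norm_smul, Real.norm_eq_abs] using norm_sum_le (Icc M N) fun n => dd W n • c n
      _ ≤ ∑ n ∈ Icc M N, (ε / 2 * |dd W n| + if n < n₁ then |dd W n| * ‖c n‖ else 0) :=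
          sum_le_sum fun n _ => hpt n
      _ ≤ ε / 2 * (K + |W N - W M|) + C := by
          rw [sum_add_distrib, ← mul_sum]
          gcongr
          exacts [hK M N hMN, hearly M N]
  obtain ⟨l, hl⟩ := exists_nat_gt (max 0 ((ε * K + 2 * C) / ε))
  refine ⟨l, fun M N hMN hlW => ?_⟩
  have hD : 0 < W N - W M := (le_max_left _ _).trans_lt (hl.trans_le hlW)
  have hDbig : ε * K + 2 * C < ε * (W N - W M) :=
    (div_lt_iff₀' hε).1 ((le_max_right _ _).trans_lt (hl.trans_le hlW))
  rw [sub_zero, norm_smul, Real.norm_eq_abs, abs_inv, abs_of_pos hD, inv_mul_lt_iff₀ hD]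
  have := hsum M N hMN
  rw [abs_of_pos hD] at this
  linarith

end RieszMean

lemma ContinuousMap.tendsto_comp_add_sub_comp {G E : Type*} [AddCommGroup G] [TopologicalSpace G]
    [IsTopologicalAddGroup G] [CompactSpace G] [SeminormedAddCommGroup E] (F : C(G, E))
    {ι : Type*} {l : Filter ι} (u : ι → G) {g : ι → G} (hg : Tendsto g l (nhds 0)) :
    Tendsto (fun i => F (u i + g i) - F (u i)) l (nhds 0) := by
  let _ : UniformSpace G := IsTopologicalAddGroup.rightUniformSpace G
  have _ : IsUniformAddGroup G := isUniformAddGroup_of_addCommGroup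
  have hpair : Tendsto (fun i => (u i, u i + g i)) l (uniformity G) := by
    rw [uniformity_eq_comap_nhds_zero G, tendsto_comap_iff]
    simpa [Function.comp_def] using hg
  have hF := Tendsto.comp (CompactSpace.uniformContinuous_of_continuous F.continuous) hpair
  rw [uniformity_eq_comap_nhds_zero E, tendsto_comap_iff] at hF
  exact hF

theorem stmt12_general {G : Type*} [AddCommGroup G] [TopologicalSpace G] [IsTopologicalAddGroup G]
    [CompactSpace G] [MeasurableSpace G]
    (μG : Measure G)
    (W : ℕ → ℝ) (hW : MemF 1 W) (u : ℕ → G) (hu : WellDistributed W u μG)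
    (g : ℕ → G) (hg : Tendsto g atTop (nhds 0)) :
    WellDistributed W (fun n => u n + g n) μG := by
  intro F
  obtain ⟨K, hK⟩ := hW.exists_sum_abs_dd_le
  have hperturb := UWLim.of_tendsto_zero hK (F.tendsto_comp_add_sub_comp u hg)
  convert (hu F).add hperturb using 1
  · ext n; simp
  · simp

/-- Well distribution is robust under perturbations tending to `0`: if `u` is well
distributed w.r.t. the uniform Riesz mean along `W` and `g(n) → 0`, then `u + g` is well
distributed as well (the normalized Haar measure `μG` is characterized as a
translation-invariant probability measure). -/
theorem stmt12 {G : Type*} [AddCommGroup G] [TopologicalSpace G] [IsTopologicalAddGroup G]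
    [CompactSpace G] [MeasurableSpace G] [BorelSpace G]
    (μG : Measure G) [IsProbabilityMeasure μG]
    (hinv : ∀ g : G, Measure.map (fun x => g + x) μG = μG)
    (W : ℕ → ℝ) (hW : MemF 1 W) (u : ℕ → G) (hu : WellDistributed W u μG)
    (g : ℕ → G) (hg : Tendsto g atTop (nhds 0)) :
    WellDistributed W (fun n => u n + g n) μG :=
  stmt12_general μG W hW u hu g hg
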